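/- Let $K$ be a field, $\xi \in K$ a nonzero element, and $t, i, j \in \mathbb{Z}$. With $R$ and $\lambda$ defined by the recursion $\lambda(0,0)=1$, $\lambda(k,0)=R(k,0)\lambda(k-1,0)$, $\lambda(k,l)=R(k,l)\lambda(k-1,l)+\lambda(k-1,l-1)$ for $0<l<k$, $\lambda(k,k)=1$, where $R(k,l)=\xi^{t(j-l)}-\xi^{t(k-1)-i}$ for $l<k$: for all integers $0 \le l \le k$ and $0 \le p \le k-l$, one has $\lambda(k,p+l)\,\lambda(p+l,l) = \binom{k-l}{p}_{\xi^t}\, \xi^{-t(k-(p+l))p}\, \lambda(k,l)$. -/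
import Mathlib


/-- Gaussian (q-)binomial coefficient, via the q-Pascal recursion. -/
def qBinom {A : Type*} [Ring A] (q : A) : ℕ → ℕ → A
  | _, 0 => 1
  | 0, _ + 1 => 0
  | n + 1, p + 1 => qBinom q n p + q ^ (p + 1) * qBinom q n (p + 1)

/-- `R(k,l) = ξ^{t(j-l)} - ξ^{t(k-1)-i}` for `l < k`, and `R(k,k) = 1`. -/
def Rc {K : Type*} [Field K] (ξ : K) (t i j : ℤ) (k l : ℕ) : K :=
  if l < k then ξ ^ (t * (j - (l : ℤ))) - ξ ^ (t * ((k : ℤ) - 1) - i) else 1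

/-- The recursively defined coefficients `λ(k,l)`. -/
def lam {K : Type*} [Field K] (ξ : K) (t i j : ℤ) : ℕ → ℕ → K
  | 0, 0 => 1
  | 0, _ + 1 => 0
  | k + 1, 0 => Rc ξ t i j (k + 1) 0 * lam ξ t i j k 0
  | k + 1, l + 1 =>
      if l + 1 = k + 1 then 1
      else if l + 1 < k + 1 then
        Rc ξ t i j (k + 1) (l + 1) * lam ξ t i j k (l + 1) + lam ξ t i j k l
      else 0

section QB
variable {A : Type*} [CommRing A]

lemma qBinom_succ_succ (q : A) (n p : ℕ) :
    qBinom q (n+1) (p+1) = qBinom q n p + q ^ (p+1) * qBinom q n (p+1) := rfl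

lemma qBinom_zero_right (q : A) : ∀ n, qBinom q n 0 = 1
  | 0 => rfl
  | _+1 => rfl

lemma qBinom_eq_zero (q : A) : ∀ n p, n < p → qBinom q n p = 0
  | 0, _+1, _ => rfl
  | n+1, p+1, h => by
      rw [qBinom_succ_succ, qBinom_eq_zero q n p (by omega),
        qBinom_eq_zero q n (p+1) (by omega)]
      ring

lemma qBinom_self (q : A) : ∀ n, qBinom q n n = 1
  | 0 => rfl
  | n+1 => by
      rw [qBinom_succ_succ, qBinom_self q n, qBinom_eq_zero q n (n+1) (by omega)]
      ring

lemma qBinom_dual (q : A) : ∀ m d : ℕ,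
    qBinom q (m+d+1) (m+1) = qBinom q (m+d) (m+1) + q ^ d * qBinom q (m+d) m := by
  intro m
  induction m with
  | zero =>
    intro d
    induction d with
    | zero => norm_num [qBinom]
    | succ d ihd =>
      simp only [Nat.zero_add] at ihd ⊢
      have h1 := qBinom_succ_succ q (d+1) 0
      simp only [Nat.zero_add] at h1
      rw [qBinom_zero_right] at h1
      have h2 := qBinom_succ_succ q d 0
      simp only [Nat.zero_add] at h2
      rw [qBinom_zero_right] at h2
      rw [qBinom_zero_right] at ihd ⊢
      linear_combination h1 - h2 + q * ihd
  | succ m ihm =>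
    intro d
    induction d with
    | zero =>
      simp only [Nat.add_zero]
      rw [qBinom_self, qBinom_eq_zero q (m+1) (m+1+1) (by omega), qBinom_self]
      ring
    | succ d ihd =>
      rw [show m+1+(d+1) = m+d+1+1 from by omega]
      have H1 := qBinom_succ_succ q (m+d+1+1) (m+1)
      have H2 := ihm (d+1)
      rw [show m+(d+1) = m+d+1 from by omega] at H2
      rw [show m+1+d = m+d+1 from by omega] at ihd
      have H4 := qBinom_succ_succ q (m+d+1) (m+1)
      have H5 := qBinom_succ_succ q (m+d+1) m
      linear_combination H1 + H2 + q^(m+1+1) * ihd - H4 - q^(d+1) * H5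

lemma key_nat (q q' u v : A) (h : q * q' = 1) (p m : ℕ) :
    (u * q'^(p+1) - v) * (qBinom q (p+1+m) (p+1) * q'^(m*(p+1)))
      + (u - v * q'^(m+1)) * (qBinom q (p+1+m) p * q'^((m+1)*p))
      = qBinom q (p+1+m+1) (p+1) * q'^((m+1)*(p+1)) * (u - v) := by
  have hA : q^(p+1) * q'^(p+1) = 1 := by rw [← mul_pow, h, one_pow]
  have hB : q^(m+1) * q'^(m+1) = 1 := by rw [← mul_pow, h, one_pow]
  have hd := qBinom_dual q p (m+1)
  rw [show p+(m+1) = p+1+m from by omega] at hd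
  have hp := qBinom_succ_succ q (p+1+m) p
  linear_combination (-(u * q'^((m+1)*(p+1)))) * hd + (v * q'^((m+1)*(p+1))) * hp
    + (v * qBinom q (p+1+m) (p+1) * q'^(m*(p+1))) * hA
    - (u * qBinom q (p+1+m) p * q'^((m+1)*p)) * hB

end QB

section L
variable {K : Type*} [Field K]

lemma lam_self (ξ : K) (t i j : ℤ) : ∀ k, lam ξ t i j k k = 1
  | 0 => rfl
  | k+1 => by rw [lam]; simp

lemma lam_succ_zero (ξ : K) (t i j : ℤ) (k : ℕ) :
    lam ξ t i j (k+1) 0 = Rc ξ t i j (k+1) 0 * lam ξ t i j k 0 := rfl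

lemma lam_succ_succ (ξ : K) (t i j : ℤ) (k l : ℕ) (h : l < k) :
    lam ξ t i j (k+1) (l+1) =
      Rc ξ t i j (k+1) (l+1) * lam ξ t i j k (l+1) + lam ξ t i j k l := by
  rw [lam, if_neg (by omega), if_pos (by omega)]

end L

section KZ
variable {K : Type*} [Field K]

lemma key_zpow (ξ : K) (hξ : ξ ≠ 0) (t i j : ℤ) (k l p : ℕ) (h : p+1+l ≤ k) :
    Rc ξ t i j (k+1) (p+1+l) *
        (qBinom (ξ^t) (k-l) (p+1) *
          ξ ^ (-(t * ((k:ℤ) - ((↑(p+1):ℤ) + (l:ℤ))) * (↑(p+1):ℤ))))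
      + Rc ξ t i j (p+1+l) l *
        (qBinom (ξ^t) (k-l) p *
          ξ ^ (-(t * ((k:ℤ) - ((p:ℤ) + (l:ℤ))) * (p:ℤ))))
      = qBinom (ξ^t) (k-l+1) (p+1) *
          ξ ^ (-(t * ((↑(k+1):ℤ) - ((↑(p+1):ℤ) + (l:ℤ))) * (↑(p+1):ℤ))) *
          Rc ξ t i j (k+1) l := by
  obtain ⟨m, rfl⟩ : ∃ m, k = p+1+l+m := ⟨k - (p+1+l), by omega⟩
  rw [show (p+1+l+m) - l = p+1+m from by omega]
  simp only [Rc]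
  rw [if_pos (show p+1+l < p+1+l+m+1 by omega), if_pos (show l < p+1+l by omega),
    if_pos (show l < p+1+l+m+1 by omega)]
  have hqq : (ξ^t) * (ξ^(-t)) = 1 := by
    rw [← zpow_add₀ hξ]; simp
  have hu : ξ^(t*(j - (↑(p+1+l):ℤ))) = ξ^(t*(j - (l:ℤ))) * (ξ^(-t))^(p+1) := by
    rw [← zpow_natCast (ξ^(-t)) (p+1), ← zpow_mul, ← zpow_add₀ hξ]
    congr 1; push_cast; ring
  have hv1 : ξ^(t*((↑(p+1+l+m+1):ℤ) - 1) - i) = ξ^(t*(↑(p+1+l+m):ℤ) - i) := by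
    congr 1; push_cast; ring
  have hv2 : ξ^(t*((↑(p+1+l):ℤ) - 1) - i)
      = ξ^(t*(↑(p+1+l+m):ℤ) - i) * (ξ^(-t))^(m+1) := by
    rw [← zpow_natCast (ξ^(-t)) (m+1), ← zpow_mul, ← zpow_add₀ hξ]
    congr 1; push_cast; ring
  have he1 : ξ^(-(t * ((↑(p+1+l+m):ℤ) - ((↑(p+1):ℤ) + (l:ℤ))) * (↑(p+1):ℤ)))
      = (ξ^(-t))^(m*(p+1)) := by
    rw [← zpow_natCast (ξ^(-t)), ← zpow_mul]
    congr 1; push_cast; ring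
  have he2 : ξ^(-(t * ((↑(p+1+l+m):ℤ) - ((p:ℤ) + (l:ℤ))) * (p:ℤ)))
      = (ξ^(-t))^((m+1)*p) := by
    rw [← zpow_natCast (ξ^(-t)), ← zpow_mul]
    congr 1; push_cast; ring
  have he3 : ξ^(-(t * ((↑(p+1+l+m+1):ℤ) - ((↑(p+1):ℤ) + (l:ℤ))) * (↑(p+1):ℤ)))
      = (ξ^(-t))^((m+1)*(p+1)) := by
    rw [← zpow_natCast (ξ^(-t)), ← zpow_mul]
    congr 1; push_cast; ring
  rw [hu, hv1, hv2, he1, he2, he3]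
  exact key_nat (ξ^t) (ξ^(-t)) _ _ hqq p m

end KZ
theorem stmt1 {K : Type*} [Field K] (ξ : K) (hξ : ξ ≠ 0) (t i j : ℤ)
    (k l p : ℕ) (hlk : l ≤ k) (hp : p ≤ k - l) :
    lam ξ t i j k (p + l) * lam ξ t i j (p + l) l =
      qBinom (ξ ^ t) (k - l) p *
        ξ ^ (-(t * ((k : ℤ) - ((p : ℤ) + (l : ℤ))) * (p : ℤ))) *
        lam ξ t i j k l := by
  induction k generalizing l p with
  | zero =>
    have hl0 : l = 0 := by omega
    subst hl0
    have hp0 : p = 0 := by omega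
    subst hp0
    norm_num [lam, qBinom]
  | succ k ih =>
    rcases p with _ | p'
    · simp [qBinom_zero_right, lam_self]
    · by_cases hke : p' + 1 + l = k + 1
      · rw [hke, lam_self, show k+1-l = p'+1 from by omega, qBinom_self]
        have hc : ((↑(k+1):ℤ) - (↑(p'+1) + (l:ℤ))) = 0 := by push_cast; omega
        rw [hc]
        simp
      · have hple : p' + 1 + l ≤ k := by omega
        rcases l with _ | l''
        · have h0 : lam ξ t i j (k+1) (p'+1+0)
              = Rc ξ t i j (k+1) (p'+1+0) * lam ξ t i j k (p'+1+0) + lam ξ t i j k (p'+0) :=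
            lam_succ_succ ξ t i j k (p'+0) (by omega)
          have hexp : lam ξ t i j (p'+1+0) 0
              = Rc ξ t i j (p'+1+0) 0 * lam ξ t i j (p'+0) 0 :=
            lam_succ_zero ξ t i j (p'+0)
          have h3 : lam ξ t i j (k+1) 0 = Rc ξ t i j (k+1) 0 * lam ξ t i j k 0 :=
            lam_succ_zero ξ t i j k
          have IH1 := ih 0 (p'+1) (Nat.zero_le k) (by omega)
          have IH2 := ih 0 p' (Nat.zero_le k) (by omega)
          have hkey := key_zpow ξ hξ t i j k 0 p' (by omega)
          rw [show k+1-0 = k-0+1 from by omega]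
          linear_combination (lam ξ t i j (p'+1+0) 0) * h0
            + (lam ξ t i j k (p'+0)) * hexp
            + (Rc ξ t i j (k+1) (p'+1+0)) * IH1
            + (Rc ξ t i j (p'+1+0) 0) * IH2
            - (qBinom (ξ^t) (k-0+1) (p'+1)
                * ξ^(-(t * ((↑(k+1):ℤ) - ((↑(p'+1):ℤ) + ((0:ℕ):ℤ))) * (↑(p'+1):ℤ)))) * h3
            + (lam ξ t i j k 0) * hkey
        · have e2 : p' + (l''+1) = p'+1+l'' := by omega
          have h0 : lam ξ t i j (k+1) (p'+1+(l''+1))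
              = Rc ξ t i j (k+1) (p'+1+(l''+1)) * lam ξ t i j k (p'+1+(l''+1))
                + lam ξ t i j k (p'+1+l'') :=
            lam_succ_succ ξ t i j k (p'+1+l'') (by omega)
          have hexp : lam ξ t i j (p'+1+(l''+1)) (l''+1)
              = Rc ξ t i j (p'+1+(l''+1)) (l''+1) * lam ξ t i j (p'+1+l'') (l''+1)
                + lam ξ t i j (p'+1+l'') l'' :=
            lam_succ_succ ξ t i j (p'+1+l'') l'' (by omega)
          have h3 : lam ξ t i j (k+1) (l''+1)
              = Rc ξ t i j (k+1) (l''+1) * lam ξ t i j k (l''+1) + lam ξ t i j k l'' :=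
            lam_succ_succ ξ t i j k l'' (by omega)
          have IH1 := ih (l''+1) (p'+1) (by omega) (by omega)
          have IH2 := ih (l''+1) p' (by omega) (by omega)
          rw [e2] at IH2
          have IH3 := ih l'' (p'+1) (by omega) (by omega)
          have hkey := key_zpow ξ hξ t i j k (l''+1) p' (by omega)
          have hC2 : qBinom (ξ^t) (k-l'') (p'+1)
                * ξ^(-(t * ((k:ℤ) - ((↑(p'+1):ℤ) + (l'':ℤ))) * (↑(p'+1):ℤ)))
              = qBinom (ξ^t) (k-(l''+1)+1) (p'+1)
                * ξ^(-(t * ((↑(k+1):ℤ) - ((↑(p'+1):ℤ) + (↑(l''+1):ℤ))) * (↑(p'+1):ℤ))) := by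
            rw [show k-(l''+1)+1 = k-l'' from by omega]
            congr 2
            push_cast; ring
          rw [show k+1-(l''+1) = k-(l''+1)+1 from by omega]
          linear_combination (lam ξ t i j (p'+1+(l''+1)) (l''+1)) * h0
            + (lam ξ t i j k (p'+1+l'')) * hexp
            + (Rc ξ t i j (k+1) (p'+1+(l''+1))) * IH1
            + (Rc ξ t i j (p'+1+(l''+1)) (l''+1)) * IH2
            + IH3
            - (qBinom (ξ^t) (k-(l''+1)+1) (p'+1)
                * ξ^(-(t * ((↑(k+1):ℤ) - ((↑(p'+1):ℤ) + (↑(l''+1):ℤ))) * (↑(p'+1):ℤ)))) * h3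
            + (lam ξ t i j k (l''+1)) * hkey
            + (lam ξ t i j k l'') * hC2
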